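/- For every n×n complex density matrix ρ, the von Neumann entropy S_VN(ρ) is the minimum of the set { H(p) : m ∈ ℕ, p a probability vector of length m, φ₁,…,φ_m unit vectors in ℂⁿ, ρ = Σ_{i=1}^{m} p_i |φ_i⟩⟨φ_i| }; in particular this set has a least element, attained by the spectral decomposition of ρ. -/

import Mathlib

open Matrix
open scoped ComplexOrder

/-- The Shannon entropy `H(p) = −Σ_i p_i log p_i` (with `0·log 0 = 0`,
which holds since `Real.log 0 = 0`). -/
noncomputable def shannonEntropy {m : ℕ} (p : Fin m → ℝ) : ℝ :=
  -∑ i, p i * Real.log (p i)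

open scoped Classical in
/-- The von Neumann entropy `S_VN(ρ) = −Σ_i λ_i log λ_i`, where `λ_i` are the
eigenvalues of the (Hermitian) matrix `ρ` listed with multiplicity. -/
noncomputable def vonNeumannEntropy {ι : Type*} [Fintype ι] [DecidableEq ι]
    (ρ : Matrix ι ι ℂ) : ℝ :=
  if h : ρ.IsHermitian then -∑ i, h.eigenvalues i * Real.log (h.eigenvalues i) else 0


/-!
Write `ψᵢ = √pᵢ φᵢ`, so that `ρ = A Aᴴ` for the matrix `A` with columns `ψᵢ`, and let `U` be a
unitary diagonalising `ρ`. The matrix `G = Uᴴ A` has orthogonal rows of squared norms `λⱼ`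
(`G Gᴴ = diag λ`) and columns of squared norms `pᵢ` (`Gᴴ G = Aᴴ A`). Bessel's inequality for the
normalised rows against a coordinate vector shows that `wᵢⱼ = |Gⱼᵢ|² / λⱼ` has row sums `≤ 1`,
while its column sums are `1` whenever `λⱼ ≠ 0`, and `pᵢ = Σⱼ wᵢⱼ λⱼ`. Jensen's inequality for
the concave function `x ↦ -x log x`, which vanishes at `0`, then gives
`Σⱼ -λⱼ log λⱼ ≤ Σᵢ -pᵢ log pᵢ`. The spectral decomposition attains the bound.
-/

open Finset Real
open scoped InnerProductSpace

theorem ConcaveOn.le_map_sum_of_sum_le_one {ι E : Type*} [AddCommGroup E] [Module ℝ E]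
    {s : Set E} {f : E → ℝ} (hf : ConcaveOn ℝ s f) (hs₀ : 0 ∈ s) (hf₀ : 0 ≤ f 0)
    {t : Finset ι} {w : ι → ℝ} {p : ι → E} (h₀ : ∀ i ∈ t, 0 ≤ w i) (h₁ : ∑ i ∈ t, w i ≤ 1)
    (hmem : ∀ i ∈ t, p i ∈ s) :
    ∑ i ∈ t, w i • f (p i) ≤ f (∑ i ∈ t, w i • p i) := by
  have hv : 0 ≤ 1 - ∑ i ∈ t, w i := sub_nonneg.mpr h₁
  have h := hf.map_add_sum_le h₀ (sub_add_cancel _ _) hmem hv hs₀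
  rw [smul_zero, zero_add] at h
  linarith [smul_nonneg hv hf₀]

theorem sum_negMulLog_sum_le_of_sum_div_le_one {ι κ : Type*} [Fintype ι] [Fintype κ]
    (q : ι → κ → ℝ) (hq : ∀ j i, 0 ≤ q j i) (hsub : ∀ i, ∑ j, q j i / ∑ i', q j i' ≤ 1) :
    ∑ j, negMulLog (∑ i, q j i) ≤ ∑ i, negMulLog (∑ j, q j i) := by
  set r : ι → ℝ := fun j => ∑ i, q j i
  have hweight : ∀ j, (∑ i, q j i / r j) * negMulLog (r j) = negMulLog (r j) := by
    intro j
    rcases eq_or_ne (r j) 0 with h | h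
    · simp [h]
    · rw [← sum_div, div_self h, one_mul]
  -- a vanishing row sum forces the row to vanish, so the junk value `x / 0 = 0` is harmless
  have hmass : ∀ j i, q j i / r j * r j = q j i := by
    intro j i
    rcases eq_or_ne (r j) 0 with h | h
    · rw [h, mul_zero, eq_comm]
      exact (sum_eq_zero_iff_of_nonneg fun i _ => hq j i).mp h i (mem_univ i)
    · exact div_mul_cancel₀ _ h
  calc ∑ j, negMulLog (r j)
      = ∑ j, (∑ i, q j i / r j) * negMulLog (r j) := by simp_rw [hweight]
    _ = ∑ i, ∑ j, q j i / r j * negMulLog (r j) := by simp_rw [sum_mul]; exact sum_comm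
    _ ≤ ∑ i, negMulLog (∑ j, q j i / r j * r j) := by
        refine sum_le_sum fun i _ => ?_
        have hr₀ : ∀ j, 0 ≤ r j := fun j => sum_nonneg fun i' _ => hq j i'
        simpa only [smul_eq_mul] using concaveOn_negMulLog.le_map_sum_of_sum_le_one
          Set.self_mem_Ici negMulLog_zero.ge (fun j _ => div_nonneg (hq j i) (hr₀ j)) (hsub i)
          (fun j _ => Set.mem_Ici.mpr (hr₀ j))
    _ = ∑ i, negMulLog (∑ j, q j i) := by simp_rw [hmass]

theorem sum_norm_inner_sq_div_norm_sq_le {𝕜 E ι : Type*} [RCLike 𝕜] [NormedAddCommGroup E]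
    [InnerProductSpace 𝕜 E] [Fintype ι] {v : ι → E} (hv : Pairwise fun j k => ⟪v j, v k⟫_𝕜 = 0)
    (x : E) : ∑ j, ‖⟪v j, x⟫_𝕜‖ ^ 2 / ‖v j‖ ^ 2 ≤ ‖x‖ ^ 2 := by
  classical
  let u : {j // v j ≠ 0} → E := fun j => (‖v j‖⁻¹ : 𝕜) • v j
  have hu : Orthonormal 𝕜 u := by
    refine ⟨fun j => norm_smul_inv_norm j.2, fun j k hjk => ?_⟩
    simp [u, inner_smul_left, inner_smul_right, hv (Subtype.coe_injective.ne hjk)]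
  calc ∑ j, ‖⟪v j, x⟫_𝕜‖ ^ 2 / ‖v j‖ ^ 2
      = ∑ j : {j // v j ≠ 0}, ‖⟪u j, x⟫_𝕜‖ ^ 2 := by
        rw [← sum_filter_of_ne (p := fun j => v j ≠ 0) fun j _ h hj => by simp [hj] at h,
          sum_subtype (p := fun j => v j ≠ 0) _ fun j => by simp]
        refine sum_congr rfl fun j _ => ?_
        simp [u, inner_smul_left, norm_mul, mul_pow, div_eq_inv_mul]
    _ ≤ ‖x‖ ^ 2 := hu.sum_inner_products_le x

section Matrix

variable {𝕜 ι κ : Type*} [RCLike 𝕜]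

theorem Matrix.mul_conjTranspose_apply_self [Fintype κ] (M : Matrix ι κ 𝕜) (j : ι) :
    (M * Mᴴ) j j = ((∑ i, ‖M j i‖ ^ 2 : ℝ) : 𝕜) := by
  simp [mul_apply, RCLike.mul_conj]

theorem Matrix.conjTranspose_mul_apply_self [Fintype ι] (M : Matrix ι κ 𝕜) (i : κ) :
    (Mᴴ * M) i i = ((∑ j, ‖M j i‖ ^ 2 : ℝ) : 𝕜) := by
  simp [mul_apply, RCLike.conj_mul]

theorem Matrix.sum_norm_sq_div_le_one_of_isDiag [Fintype ι] [Fintype κ] {G : Matrix ι κ 𝕜}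
    (hG : (G * Gᴴ).IsDiag) (i : κ) : ∑ j, ‖G j i‖ ^ 2 / ∑ i', ‖G j i'‖ ^ 2 ≤ 1 := by
  classical
  let v : ι → EuclideanSpace 𝕜 κ := fun j => WithLp.toLp 2 (G j)
  have hv : Pairwise fun j k => ⟪v j, v k⟫_𝕜 = 0 := fun j k hjk => by
    simpa [v, PiLp.inner_apply, mul_apply, mul_comm] using hG hjk.symm
  simpa [v, PiLp.inner_apply, EuclideanSpace.norm_sq_eq, PiLp.norm_single] using
    sum_norm_inner_sq_div_norm_sq_le hv (EuclideanSpace.single i 1)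

theorem Matrix.sum_negMulLog_sum_norm_sq_le_of_isDiag [Fintype ι] [Fintype κ] {G : Matrix ι κ 𝕜}
    (hG : (G * Gᴴ).IsDiag) :
    ∑ j, negMulLog (∑ i, ‖G j i‖ ^ 2) ≤ ∑ i, negMulLog (∑ j, ‖G j i‖ ^ 2) :=
  sum_negMulLog_sum_le_of_sum_div_le_one _ (fun _ _ => sq_nonneg _)
    (sum_norm_sq_div_le_one_of_isDiag hG)

theorem Matrix.sum_smul_vecMulVec_eq_mul_conjTranspose [Fintype ι] [Fintype κ] {p : κ → ℝ}
    (hp : ∀ i, 0 ≤ p i) (φ : κ → ι → 𝕜) :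
    ∑ i, (p i : 𝕜) • vecMulVec (φ i) (star (φ i)) =
      of (fun a i => (√(p i) : 𝕜) * φ i a) * (of fun a i => (√(p i) : 𝕜) * φ i a)ᴴ := by
  ext a b
  simp only [sum_apply, smul_apply, vecMulVec_apply, mul_apply, of_apply, conjTranspose_apply,
    Pi.star_apply, star_mul', RCLike.star_def, RCLike.conj_ofReal, smul_eq_mul]
  refine sum_congr rfl fun i _ => ?_
  have hsq : (√(p i) : 𝕜) * √(p i) = p i := by
    rw [← RCLike.ofReal_mul, Real.mul_self_sqrt (hp i)]
  linear_combination φ i a * (starRingEnd 𝕜) (φ i b) * hsq.symm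

theorem Matrix.IsHermitian.sum_negMulLog_eigenvalues_le [Fintype ι] [Fintype κ] [DecidableEq ι]
    {ρ : Matrix ι ι 𝕜} (hρ : ρ.IsHermitian) (A : Matrix ι κ 𝕜) (hA : ρ = A * Aᴴ) :
    ∑ j, negMulLog (hρ.eigenvalues j) ≤ ∑ i, negMulLog (∑ a, ‖A a i‖ ^ 2) := by
  set U : Matrix ι ι 𝕜 := (hρ.eigenvectorUnitary : Matrix ι ι 𝕜)
  have hU : U * Uᴴ = 1 := Unitary.mul_star_self_of_mem hρ.eigenvectorUnitary.2
  set G := Uᴴ * A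
  have hGG : G * Gᴴ = diagonal (RCLike.ofReal ∘ hρ.eigenvalues) := by
    calc G * Gᴴ = Uᴴ * ρ * U := by
          rw [hA, conjTranspose_mul, conjTranspose_conjTranspose, Matrix.mul_assoc,
            Matrix.mul_assoc, Matrix.mul_assoc]
      _ = _ := by
          rw [← hρ.conjStarAlgAut_star_eigenvectorUnitary, Unitary.conjStarAlgAut_star_apply]
          rfl
  have hrow : ∀ j, ∑ i, ‖G j i‖ ^ 2 = hρ.eigenvalues j := fun j => by
    have h := congrFun (congrFun hGG j) j
    rw [mul_conjTranspose_apply_self, diagonal_apply_eq, Function.comp_apply] at h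
    exact_mod_cast h
  have hcol : ∀ i, ∑ j, ‖G j i‖ ^ 2 = ∑ a, ‖A a i‖ ^ 2 := fun i => by
    have hGG' : Gᴴ * G = Aᴴ * A := by
      rw [conjTranspose_mul, conjTranspose_conjTranspose, Matrix.mul_assoc, ← Matrix.mul_assoc U,
        hU, Matrix.one_mul]
    have h := congrFun (congrFun hGG' i) i
    rw [conjTranspose_mul_apply_self, conjTranspose_mul_apply_self] at h
    exact_mod_cast h
  simpa only [hrow, hcol] using
    sum_negMulLog_sum_norm_sq_le_of_isDiag (hGG ▸ isDiag_diagonal _ : (G * Gᴴ).IsDiag)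

theorem Matrix.IsHermitian.sum_negMulLog_eigenvalues_le_of_eq_sum [Fintype ι] [Fintype κ]
    [DecidableEq ι] {ρ : Matrix ι ι 𝕜} (hρ : ρ.IsHermitian) {p : κ → ℝ} {φ : κ → ι → 𝕜}
    (hp : ∀ i, 0 ≤ p i) (hφ : ∀ i, ∑ a, ‖φ i a‖ ^ 2 = 1)
    (hdec : ρ = ∑ i, (p i : 𝕜) • vecMulVec (φ i) (star (φ i))) :
    ∑ j, negMulLog (hρ.eigenvalues j) ≤ ∑ i, negMulLog (p i) := by
  have hnorm : ∀ i, ∑ a, ‖(√(p i) : 𝕜) * φ i a‖ ^ 2 = p i := fun i => by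
    simp_rw [norm_mul, mul_pow, ← mul_sum, hφ i, RCLike.norm_ofReal, abs_of_nonneg (sqrt_nonneg _),
      sq_sqrt (hp i), mul_one]
  simpa only [of_apply, hnorm] using
    hρ.sum_negMulLog_eigenvalues_le _ (hdec.trans (sum_smul_vecMulVec_eq_mul_conjTranspose hp φ))

theorem Matrix.IsHermitian.eq_sum_eigenvalues_smul_vecMulVec [Fintype ι] [DecidableEq ι]
    {ρ : Matrix ι ι 𝕜} (hρ : ρ.IsHermitian) :
    ρ = ∑ j, (hρ.eigenvalues j : 𝕜) •
      vecMulVec ⇑(hρ.eigenvectorBasis j) (star ⇑(hρ.eigenvectorBasis j)) := by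
  conv_lhs => rw [hρ.spectral_theorem]
  ext a b
  simp only [Unitary.conjStarAlgAut_apply, mul_apply, eigenvectorUnitary_apply, diagonal_apply,
    Function.comp_apply, mul_ite, mul_zero, sum_ite_eq', mem_univ, if_true, star_apply,
    RCLike.star_def, algebraMap_smul, sum_apply, smul_apply, vecMulVec_apply, Pi.star_apply,
    RCLike.real_smul_eq_coe_mul]
  exact sum_congr rfl fun j _ => by ring

end Matrix

theorem shannonEntropy_eq_sum_negMulLog {m : ℕ} (p : Fin m → ℝ) :
    shannonEntropy p = ∑ i, negMulLog (p i) := by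
  simp [shannonEntropy, negMulLog, sum_neg_distrib]

theorem Matrix.IsHermitian.vonNeumannEntropy_eq {ι : Type*} [Fintype ι] [DecidableEq ι]
    {ρ : Matrix ι ι ℂ} (hρ : ρ.IsHermitian) :
    vonNeumannEntropy ρ = ∑ j, negMulLog (hρ.eigenvalues j) := by
  simp [vonNeumannEntropy, hρ, negMulLog, sum_neg_distrib]

/-- The von Neumann entropy of a density matrix `ρ` is the *minimum* (least element,
attained e.g. by the spectral decomposition) of the set of Shannon entropies of the
weights of all decompositions of `ρ` into pure (rank-one) states. -/
theorem isLeast_shannonEntropy_pure_decompositions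
    (n : ℕ) (ρ : Matrix (Fin n) (Fin n) ℂ) (hρ : ρ.PosSemidef) (htr : ρ.trace = 1) :
    IsLeast
      {x : ℝ | ∃ (m : ℕ) (p : Fin m → ℝ) (φ : Fin m → (Fin n → ℂ)),
        (∀ i, 0 ≤ p i) ∧ (∑ i, p i = 1) ∧ (∀ i, ∑ a, ‖φ i a‖ ^ 2 = 1) ∧
        ρ = ∑ i, (p i : ℂ) • Matrix.vecMulVec (φ i) (star (φ i)) ∧
        x = shannonEntropy p}
      (vonNeumannEntropy ρ) := by
  have hH : ρ.IsHermitian := hρ.isHermitian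
  rw [hH.vonNeumannEntropy_eq]
  refine ⟨⟨n, hH.eigenvalues, fun j => ⇑(hH.eigenvectorBasis j), hρ.eigenvalues_nonneg, ?_,
    fun j => ?_, hH.eq_sum_eigenvalues_smul_vecMulVec,
    (shannonEntropy_eq_sum_negMulLog _).symm⟩, ?_⟩
  · apply RCLike.ofReal_injective (K := ℂ)
    rw [RCLike.ofReal_sum, RCLike.ofReal_one, ← hH.trace_eq_sum_eigenvalues, htr]
  · rw [← EuclideanSpace.norm_sq_eq, hH.eigenvectorBasis.orthonormal.1 j, one_pow]
  · rintro _ ⟨m, p, φ, hp, -, hφ, hdec, rfl⟩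
    rw [shannonEntropy_eq_sum_negMulLog]
    exact hH.sum_negMulLog_eigenvalues_le_of_eq_sum hp hφ hdec
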